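/- Suppose (G,p) is a generic complex realisation of a rigid graph G = (V,E) with V = {v₁,…,v_n} and n ≥ 3, and (G,q) is a realisation congruent to (G,p) which is in standard position with respect to (v₁,v₂). Then (G,p) is radically (respectively quadratically) solvable if and only if ℚ(q) : ℚ(d_G(q)) is radically (respectively quadratically) solvable. -/

import Mathlib

open scoped Classical

noncomputable section

/-- The subfield generated by a subfield `K` and an element `x`. -/
def Subfield.adjoinEl {F : Type*} [Field F] (K : Subfield F) (x : F) : Subfield F :=
  Subfield.closure (↑K ∪ {x})

/-- `M` is a radical extension of `K`: there is a tower
`K = K₁ ⊆ K₂ ⊆ … ⊆ K_t = M` with `K_{i+1} = K_i(x_i)` and `x_i ^ n_i ∈ K_i`. -/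
def IsRadicalExtension {F : Type*} [Field F] (K M : Subfield F) : Prop :=
  ∃ t : ℕ, ∃ c : Fin (t + 1) → Subfield F,
    c 0 = K ∧ c (Fin.last t) = M ∧
    ∀ i : Fin t, ∃ x : F, ∃ n : ℕ, 0 < n ∧ x ^ n ∈ c i.castSucc ∧
      c i.succ = (c i.castSucc).adjoinEl x

/-- `M` is a quadratic extension of `K`: a radical extension with all `n_i = 2`. -/
def IsQuadraticExtension {F : Type*} [Field F] (K M : Subfield F) : Prop :=
  ∃ t : ℕ, ∃ c : Fin (t + 1) → Subfield F,
    c 0 = K ∧ c (Fin.last t) = M ∧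
    ∀ i : Fin t, ∃ x : F, x ^ 2 ∈ c i.castSucc ∧
      c i.succ = (c i.castSucc).adjoinEl x

/-- `L : K` is radically solvable if `L` is contained in a radical extension of `K`. -/
def RadicallySolvable {F : Type*} [Field F] (K L : Subfield F) : Prop :=
  ∃ M : Subfield F, L ≤ M ∧ IsRadicalExtension K M

/-- `L : K` is quadratically solvable if `L` is contained in a quadratic extension of `K`. -/
def QuadraticallySolvable {F : Type*} [Field F] (K L : Subfield F) : Prop :=
  ∃ M : Subfield F, L ≤ M ∧ IsQuadraticExtension K M

/-- A finite graph: a finite set of vertices (natural numbers) and of edges. -/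
structure RGraph : Type where
  verts : Finset ℕ
  edges : Finset (Sym2 ℕ)

namespace RGraph

/-- A graph is well-formed if it has no loops and edges join vertices. -/
def WellFormed (G : RGraph) : Prop :=
  (∀ e ∈ G.edges, ¬ e.IsDiag) ∧ (∀ e ∈ G.edges, ∀ v ∈ e, v ∈ G.verts)

def union (G H : RGraph) : RGraph := ⟨G.verts ∪ H.verts, G.edges ∪ H.edges⟩

def addEdge (G : RGraph) (u v : ℕ) : RGraph := ⟨G.verts, insert s(u, v) G.edges⟩

def deleteEdge (G : RGraph) (e : Sym2 ℕ) : RGraph := ⟨G.verts, G.edges.erase e⟩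

end RGraph

/-- `d_p(u,v) = a² + b²` where `(a,b) = p u - p v`. -/
def sqDist {R : Type*} [CommRing R] (p : ℕ → R × R) (u v : ℕ) : R :=
  ((p u).1 - (p v).1) ^ 2 + ((p u).2 - (p v).2) ^ 2

/-- Two frameworks are equivalent if corresponding edges have equal squared lengths. -/
def FEquiv {R : Type*} [CommRing R] (G : RGraph) (p q : ℕ → R × R) : Prop :=
  ∀ u v : ℕ, s(u, v) ∈ G.edges → sqDist p u v = sqDist q u v

/-- Two frameworks are congruent if all pairs of vertices have equal squared distances. -/
def FCong {R : Type*} [CommRing R] (G : RGraph) (p q : ℕ → R × R) : Prop :=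
  ∀ u ∈ G.verts, ∀ v ∈ G.verts, sqDist p u v = sqDist q u v

/-- A framework is generic if the coordinates of its points are
algebraically independent over `ℚ`. -/
def FGeneric {R : Type*} [CommRing R] [Algebra ℚ R] (G : RGraph) (p : ℕ → R × R) : Prop :=
  AlgebraicIndependent ℚ
    (fun vb : {x // x ∈ G.verts} × Bool => if vb.2 then (p vb.1.1).2 else (p vb.1.1).1)

/-- A complex framework is quasi-generic if it is congruent to a generic one. -/
def QuasiGeneric (G : RGraph) (p : ℕ → ℂ × ℂ) : Prop :=
  ∃ p' : ℕ → ℂ × ℂ, FGeneric G p' ∧ FCong G p p'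

/-- A real framework is rigid if all equivalent frameworks near it are congruent to it. -/
def RigidFramework (G : RGraph) (p : ℕ → ℝ × ℝ) : Prop :=
  ∃ ε : ℝ, 0 < ε ∧ ∀ q : ℕ → ℝ × ℝ, FEquiv G p q →
    (∀ v ∈ G.verts, ((p v).1 - (q v).1) ^ 2 + ((p v).2 - (q v).2) ^ 2 < ε) →
    FCong G p q

/-- A graph is rigid if every generic real realisation is rigid. -/
def RGraph.Rigid (G : RGraph) : Prop :=
  ∀ p : ℕ → ℝ × ℝ, FGeneric G p → RigidFramework G p

/-- A graph is minimally rigid if it is rigid but ceases to be so on deleting any edge. -/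
def RGraph.MinimallyRigid (G : RGraph) : Prop :=
  G.Rigid ∧ ∀ e ∈ G.edges, ¬ (G.deleteEdge e).Rigid

/-- A graph is globally rigid if for every generic complex realisation every
equivalent realisation is congruent to it. -/
def RGraph.GloballyRigid (G : RGraph) : Prop :=
  ∀ p : ℕ → ℂ × ℂ, FGeneric G p → ∀ q : ℕ → ℂ × ℂ, FEquiv G p q → FCong G p q

/-- `ℚ(p)`: the subfield of `ℂ` generated by the coordinates of the points of `p`. -/
def coordField (G : RGraph) (p : ℕ → ℂ × ℂ) : Subfield ℂ :=
  Subfield.closure {z : ℂ | ∃ v ∈ G.verts, z = (p v).1 ∨ z = (p v).2}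

/-- `ℚ(d_G(p))`: the subfield of `ℂ` generated by the squared edge lengths of `(G,p)`. -/
def distField (G : RGraph) (p : ℕ → ℂ × ℂ) : Subfield ℂ :=
  Subfield.closure {z : ℂ | ∃ u v : ℕ, s(u, v) ∈ G.edges ∧ z = sqDist p u v}

/-- A complex framework is radically solvable if some congruent framework `(G,q)`
has `ℚ(q) : ℚ(d_G(q))` radically solvable. -/
def RadSolvableFramework (G : RGraph) (p : ℕ → ℂ × ℂ) : Prop :=
  ∃ q : ℕ → ℂ × ℂ, FCong G p q ∧ RadicallySolvable (distField G q) (coordField G q)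

def QuadSolvableFramework (G : RGraph) (p : ℕ → ℂ × ℂ) : Prop :=
  ∃ q : ℕ → ℂ × ℂ, FCong G p q ∧ QuadraticallySolvable (distField G q) (coordField G q)

/-- A graph is radically solvable if every generic realisation is radically solvable. -/
def RGraph.RadSolvable (G : RGraph) : Prop :=
  ∀ p : ℕ → ℂ × ℂ, FGeneric G p → RadSolvableFramework G p

/-- A graph is quadratically solvable if every generic realisation is so. -/
def RGraph.QuadSolvable (G : RGraph) : Prop :=
  ∀ p : ℕ → ℂ × ℂ, FGeneric G p → QuadSolvableFramework G p

/-- Standard position with respect to `(v₁, v₂)`: `p v₁ = (0,0)` and `p v₂ = (0,z)`. -/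
def StdPos (p : ℕ → ℂ × ℂ) (v₁ v₂ : ℕ) : Prop :=
  p v₁ = (0, 0) ∧ (p v₂).1 = 0

/-! A congruent realisation `q'` has the same edge lengths as `q`, so `ℚ(d_G(q')) = ℚ(d_G(q))`,
and all squared distances of `q` lie in `ℚ(q')`. These distances determine `q` up to square roots:
`(q v₂).2` is a square root of `d(v₂, v₁)`, which is nonzero by genericity; each `(q w).2` is then a
rational function of distances and `(q v₂).2`; and each `(q w).1` is a square root of
`d(w, v₁) - (q w).2 ^ 2`. Hence `ℚ(q)` lies in a quadratic tower over any field containing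
`ℚ(q')`. -/

section FinChain

variable {α : Type*}

/-- The shape of `IsRadicalExtension` and `IsQuadraticExtension`: both unfold to a `FinChain`. -/
def FinChain (R : α → α → Prop) (a b : α) : Prop :=
  ∃ t : ℕ, ∃ f : Fin (t + 1) → α,
    f 0 = a ∧ f (Fin.last t) = b ∧ ∀ i : Fin t, R (f i.castSucc) (f i.succ)

theorem FinChain.tail {R : α → α → Prop} {a b c : α} (h : FinChain R a b) (hbc : R b c) :
    FinChain R a c := by
  obtain ⟨t, f, hf₀, hfb, hstep⟩ := h
  refine ⟨t + 1, Fin.snoc f c, ?_, Fin.snoc_last _ _, fun i => ?_⟩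
  · rw [← Fin.castSucc_zero, Fin.snoc_castSucc, hf₀]
  · induction i using Fin.lastCases with
    | last => rwa [Fin.succ_last, Fin.snoc_last, Fin.snoc_castSucc, hfb]
    | cast j => simpa only [Fin.succ_castSucc, Fin.snoc_castSucc] using hstep j

end FinChain

section Adjoin

variable {F : Type*} [Field F]

theorem Subfield.le_adjoinEl (K : Subfield F) (x : F) : K ≤ K.adjoinEl x :=
  fun _ hy => subset_closure (Or.inl hy)

theorem Subfield.mem_adjoinEl (K : Subfield F) (x : F) : x ∈ K.adjoinEl x :=
  subset_closure (Or.inr rfl)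

theorem IsRadicalExtension.adjoinEl {K M : Subfield F} (h : IsRadicalExtension K M) {x : F}
    {n : ℕ} (hn : 0 < n) (hx : x ^ n ∈ M) : IsRadicalExtension K (M.adjoinEl x) :=
  FinChain.tail
    (R := fun A B : Subfield F => ∃ x : F, ∃ n : ℕ, 0 < n ∧ x ^ n ∈ A ∧ B = A.adjoinEl x)
    h ⟨x, n, hn, hx, rfl⟩

theorem IsQuadraticExtension.adjoinEl {K M : Subfield F} (h : IsQuadraticExtension K M) {x : F}
    (hx : x ^ 2 ∈ M) : IsQuadraticExtension K (M.adjoinEl x) :=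
  FinChain.tail (R := fun A B : Subfield F => ∃ x : F, x ^ 2 ∈ A ∧ B = A.adjoinEl x) h ⟨x, hx, rfl⟩

theorem exists_le_forall_mem_of_forall_sq_mem {P : Subfield F → Prop}
    (hP : ∀ A x, x ^ 2 ∈ A → P A → P (A.adjoinEl x)) (s : Finset F) {A : Subfield F}
    (hA : P A) (hs : ∀ x ∈ s, x ^ 2 ∈ A) : ∃ B, P B ∧ A ≤ B ∧ ∀ x ∈ s, x ∈ B := by
  induction s using Finset.induction_on generalizing A with
  | empty => exact ⟨A, hA, le_rfl, by simp⟩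
  | insert x s _ ih =>
    have hAx := A.le_adjoinEl x
    obtain ⟨B, hB, hxB, hsB⟩ := ih (hP A x (hs x (s.mem_insert_self x)) hA)
      fun y hy => hAx (hs y (Finset.mem_insert_of_mem hy))
    refine ⟨B, hB, hAx.trans hxB, ?_⟩
    simpa only [Finset.forall_mem_insert] using ⟨hxB (A.mem_adjoinEl x), hsB⟩

end Adjoin

theorem FCong.symm {R : Type*} [CommRing R] {G : RGraph} {p q : ℕ → R × R}
    (h : FCong G p q) : FCong G q p :=
  fun u hu v hv => (h u hu v hv).symm

theorem FCong.trans {R : Type*} [CommRing R] {G : RGraph} {p q r : ℕ → R × R}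
    (hpq : FCong G p q) (hqr : FCong G q r) : FCong G p r :=
  fun u hu v hv => (hpq u hu v hv).trans (hqr u hu v hv)

theorem sqDist_ne_zero_of_fGeneric {R : Type*} [CommRing R] [Algebra ℚ R] {G : RGraph}
    {p : ℕ → R × R} (hp : FGeneric G p) {u v : ℕ} (hu : u ∈ G.verts) (hv : v ∈ G.verts)
    (huv : u ≠ v) : sqDist p u v ≠ 0 := by
  let ι := {w // w ∈ G.verts} × Bool
  let P : MvPolynomial ι ℚ :=
    (.X (⟨u, hu⟩, false) - .X (⟨v, hv⟩, false)) ^ 2 + (.X (⟨u, hu⟩, true) - .X (⟨v, hv⟩, true)) ^ 2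
  have hP : MvPolynomial.aeval (fun i : ι => if i.2 then (p i.1.1).2 else (p i.1.1).1) P =
      sqDist p u v := by
    simp [P, sqDist]
  have hP_ne : P ≠ 0 := by
    intro h0
    -- at the point with first coordinates the vertex labels and second coordinates `0`,
    -- `P` takes the value `(u - v) ^ 2`
    have h1 := congrArg (MvPolynomial.eval fun i : ι => if i.2 then 0 else (i.1.1 : ℚ)) h0
    simp [P, sub_eq_zero, huv] at h1
  intro h0
  exact hP_ne (algebraicIndependent_iff_injective_aeval.mp hp (by rw [hP, h0, map_zero]))

theorem sqDist_mem_coordField {G : RGraph} (p : ℕ → ℂ × ℂ) {u v : ℕ} (hu : u ∈ G.verts)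
    (hv : v ∈ G.verts) : sqDist p u v ∈ coordField G p := by
  have hcoord : ∀ w ∈ G.verts, (p w).1 ∈ coordField G p ∧ (p w).2 ∈ coordField G p :=
    fun w hw => ⟨Subfield.subset_closure ⟨w, hw, Or.inl rfl⟩,
      Subfield.subset_closure ⟨w, hw, Or.inr rfl⟩⟩
  exact add_mem (pow_mem (sub_mem (hcoord u hu).1 (hcoord v hv).1) 2)
    (pow_mem (sub_mem (hcoord u hu).2 (hcoord v hv).2) 2)

theorem distField_eq_of_fCong {G : RGraph} (hwf : G.WellFormed) {p q : ℕ → ℂ × ℂ}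
    (h : FCong G p q) : distField G p = distField G q := by
  have hedge : ∀ u v, s(u, v) ∈ G.edges → sqDist p u v = sqDist q u v := fun u v he =>
    h u (hwf.2 _ he u (Sym2.mem_mk_left u v)) v (hwf.2 _ he v (Sym2.mem_mk_right u v))
  unfold distField
  congr 1
  ext z
  constructor
  · rintro ⟨u, v, he, rfl⟩
    exact ⟨u, v, he, hedge u v he⟩
  · rintro ⟨u, v, he, rfl⟩
    exact ⟨u, v, he, (hedge u v he).symm⟩

namespace StdPos

variable {q : ℕ → ℂ × ℂ} {v₁ v₂ : ℕ}

theorem sqDist_eq (h : StdPos q v₁ v₂) : sqDist q v₂ v₁ = (q v₂).2 ^ 2 := by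
  simp [sqDist, h.1, h.2]

theorem fst_sq_eq (h : StdPos q v₁ v₂) (w : ℕ) :
    (q w).1 ^ 2 = sqDist q w v₁ - (q w).2 ^ 2 := by
  simp [sqDist, h.1]

theorem snd_eq (h : StdPos q v₁ v₂) (hz : (q v₂).2 ≠ 0) (w : ℕ) :
    (q w).2 = (sqDist q w v₁ + sqDist q v₂ v₁ - sqDist q w v₂) / (2 * (q v₂).2) := by
  field_simp
  simp only [sqDist, h.1, h.2]
  ring

end StdPos

theorem exists_coordField_le_of_stdPos {P : Subfield ℂ → Prop}
    (hP : ∀ A x, x ^ 2 ∈ A → P A → P (A.adjoinEl x)) {G : RGraph} {q : ℕ → ℂ × ℂ}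
    {v₁ v₂ : ℕ} (hv₁ : v₁ ∈ G.verts) (hv₂ : v₂ ∈ G.verts) (hstd : StdPos q v₁ v₂)
    (hz : (q v₂).2 ≠ 0) {A : Subfield ℂ} (hA : P A)
    (hdist : ∀ u ∈ G.verts, ∀ v ∈ G.verts, sqDist q u v ∈ A) :
    ∃ B, P B ∧ coordField G q ≤ B := by
  set A₁ := A.adjoinEl (q v₂).2
  have hAA₁ : A ≤ A₁ := A.le_adjoinEl _
  have hA₁ : P A₁ := hP A _ (hstd.sqDist_eq ▸ hdist v₂ hv₂ v₁ hv₁) hA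
  have hsnd : ∀ w ∈ G.verts, (q w).2 ∈ A₁ := fun w hw => by
    rw [hstd.snd_eq hz w]
    refine div_mem (sub_mem (add_mem ?_ ?_) ?_) (mul_mem (ofNat_mem A₁ 2) (A.mem_adjoinEl _))
    all_goals exact hAA₁ (hdist _ ‹_› _ ‹_›)
  have hfst : ∀ x ∈ G.verts.image fun w => (q w).1, x ^ 2 ∈ A₁ := by
    simp only [Finset.forall_mem_image]
    intro w hw
    rw [hstd.fst_sq_eq w]
    exact sub_mem (hAA₁ (hdist w hw v₁ hv₁)) (pow_mem (hsnd w hw) 2)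
  obtain ⟨B, hB, hA₁B, hfstB⟩ := exists_le_forall_mem_of_forall_sq_mem hP _ hA₁ hfst
  refine ⟨B, hB, Subfield.closure_le.mpr ?_⟩
  rintro _ ⟨w, hw, rfl | rfl⟩
  · exact hfstB _ (Finset.mem_image_of_mem _ hw)
  · exact hA₁B (hsnd w hw)

theorem statement8_general (G : RGraph) (hwf : G.WellFormed)
    (v₁ v₂ : ℕ) (hv₁ : v₁ ∈ G.verts) (hv₂ : v₂ ∈ G.verts) (hne : v₁ ≠ v₂)
    (p q : ℕ → ℂ × ℂ) (hp : FGeneric G p)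
    (hcong : FCong G p q) (hstd : StdPos q v₁ v₂) :
    (RadSolvableFramework G p ↔ RadicallySolvable (distField G q) (coordField G q)) ∧
    (QuadSolvableFramework G p ↔ QuadraticallySolvable (distField G q) (coordField G q)) := by
  have hz : (q v₂).2 ≠ 0 := by
    have h := sqDist_ne_zero_of_fGeneric hp hv₂ hv₁ hne.symm
    rwa [hcong v₂ hv₂ v₁ hv₁, hstd.sqDist_eq, pow_ne_zero_iff two_ne_zero] at h
  have transfer : ∀ E : Subfield ℂ → Subfield ℂ → Prop,
      (∀ K A x, x ^ 2 ∈ A → E K A → E K (A.adjoinEl x)) →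
      (∃ q', FCong G p q' ∧ ∃ M, coordField G q' ≤ M ∧ E (distField G q') M) →
      ∃ N, coordField G q ≤ N ∧ E (distField G q) N := by
    rintro E hE ⟨q', hq', M, hq'M, hM⟩
    have hqq' : FCong G q q' := hcong.symm.trans hq'
    rw [← distField_eq_of_fCong hwf hqq'] at hM
    obtain ⟨N, hN, hqN⟩ := exists_coordField_le_of_stdPos (hE _) hv₁ hv₂ hstd hz hM
      fun u hu v hv => hqq' u hu v hv ▸ hq'M (sqDist_mem_coordField q' hu hv)
    exact ⟨N, hqN, hN⟩
  exact ⟨⟨transfer IsRadicalExtension fun _ _ _ hx h => h.adjoinEl two_pos hx,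
      fun h => ⟨q, hcong, h⟩⟩,
    ⟨transfer IsQuadraticExtension fun _ _ _ hx h => h.adjoinEl hx, fun h => ⟨q, hcong, h⟩⟩⟩

/-- Lemma: a generic realisation of a rigid graph is radically (quadratically) solvable
iff `ℚ(q) : ℚ(d_G(q))` is radically (quadratically) solvable for a congruent
realisation `q` in standard position. -/
theorem statement8 (G : RGraph) (hwf : G.WellFormed) (hrigid : G.Rigid)
    (hcard : 3 ≤ G.verts.card)
    (v₁ v₂ : ℕ) (hv₁ : v₁ ∈ G.verts) (hv₂ : v₂ ∈ G.verts) (hne : v₁ ≠ v₂)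
    (p q : ℕ → ℂ × ℂ) (hp : FGeneric G p)
    (hcong : FCong G p q) (hstd : StdPos q v₁ v₂) :
    (RadSolvableFramework G p ↔ RadicallySolvable (distField G q) (coordField G q)) ∧
    (QuadSolvableFramework G p ↔ QuadraticallySolvable (distField G q) (coordField G q)) :=
  statement8_general G hwf v₁ v₂ hv₁ hv₂ hne p q hp hcong hstd
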